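/- Let n ≥ 0 be an integer, A > 1 and B = A/(A-1). Then for all δ ∈ (0, n+1), s_n(δ) < A·ln((n+1)/δ) + B·(n+1-δ). -/

import Mathlib

open Real Finset

/-- Degree-n Taylor polynomial of `exp` at 0. -/
noncomputable def T (n : ℕ) (s : ℝ) : ℝ := ∑ k ∈ Finset.range (n + 1), s ^ k / (Nat.factorial k)

noncomputable def Ffun (n : ℕ) (s : ℝ) : ℝ := Real.exp s - T n s
noncomputable def Dfun (n : ℕ) (s : ℝ) : ℝ := s^(n+1) / (Nat.factorial n * Ffun n s)
noncomputable def Kfun (n : ℕ) (A B : ℝ) (s : ℝ) : ℝ :=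
  A * Real.log ((((n:ℝ)+1)) / Dfun n s) + B * (((n:ℝ)+1) - Dfun n s) - s

lemma T_hasDerivAt (n : ℕ) (s : ℝ) :
    HasDerivAt (T n) (T n s - s ^ n / (Nat.factorial n)) s := by
  induction n with
  | zero =>
    have h0 : T 0 = fun _ : ℝ => (1:ℝ) := by
      funext x; simp [T]
    rw [h0]
    simpa [T] using (hasDerivAt_const s (1:ℝ))
  | succ k ih =>
    have h1 : T (k+1) = fun x : ℝ => T k x + x ^ (k+1) / (Nat.factorial (k+1)) := by
      funext x; simp [T, Finset.sum_range_succ]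
    rw [h1]
    have h2 : HasDerivAt (fun x : ℝ => x ^ (k+1) / (Nat.factorial (k+1)))
        (s ^ k / Nat.factorial k) s := by
      have := (hasDerivAt_pow (k+1) s).div_const (Nat.factorial (k+1) : ℝ)
      refine this.congr_deriv ?_
      have hk : (Nat.factorial (k+1) : ℝ) = (k+1) * Nat.factorial k := by
        push_cast [Nat.factorial_succ]; ring
      rw [hk]
      have : (Nat.factorial k : ℝ) ≠ 0 := Nat.cast_ne_zero.mpr (Nat.factorial_ne_zero k)
      field_simp
      rw [Nat.add_sub_cancel]; push_cast
      ring
    have := (ih.add h2)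
    refine this.congr_deriv ?_
    ring


lemma F_lb (n : ℕ) {s : ℝ} (hs : 0 ≤ s) :
    s^(n+1)/(Nat.factorial (n+1)) + s^(n+2)/(Nat.factorial (n+2)) ≤ Ffun n s := by
  have h := Real.sum_le_exp_of_nonneg hs (n+3)
  have he : ∑ i ∈ range (n+3), s ^ i / i.factorial
      = T n s + (s^(n+1)/(Nat.factorial (n+1)) + s^(n+2)/(Nat.factorial (n+2))) := by
    rw [show n+3 = (n+1)+1+1 by ring, Finset.sum_range_succ, Finset.sum_range_succ]
    simp [T]; ring
  rw [he] at h
  simp only [Ffun]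
  linarith

lemma fact_pos' (n : ℕ) : (0:ℝ) < Nat.factorial n := by
  exact_mod_cast Nat.factorial_pos n

lemma Fpos (n : ℕ) {s : ℝ} (hs : 0 < s) : 0 < Ffun n s := by
  have h := F_lb n hs.le
  have h1 : (0:ℝ) < s^(n+1)/(Nat.factorial (n+1)) := by positivity
  have h2 : (0:ℝ) < s^(n+2)/(Nat.factorial (n+2)) := by positivity
  linarith

lemma Dpos (n : ℕ) {s : ℝ} (hs : 0 < s) : 0 < Dfun n s := by
  have := Fpos n hs
  have := fact_pos' n
  unfold Dfun; positivity

lemma Dub (n : ℕ) {s : ℝ} (hs : 0 < s) :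
    Dfun n s * (((n:ℝ)+2)+s) ≤ ((n:ℝ)+1)*(((n:ℝ)+2)) := by
  have hF := Fpos n hs
  have hFlb := F_lb n hs.le
  have hc := fact_pos' n
  have hc1 : (Nat.factorial (n+1) : ℝ) = ((n:ℝ)+1) * Nat.factorial n := by
    push_cast [Nat.factorial_succ]; ring
  have hc2 : (Nat.factorial (n+2) : ℝ) = (((n:ℝ)+2)) * (((n:ℝ)+1)) * Nat.factorial n := by
    push_cast [Nat.factorial_succ]; ring
  -- D s ≤ (n+1)(n+2)/(n+2+s)
  have hD : Dfun n s = s^(n+1) / (Nat.factorial n * Ffun n s) := rfl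
  rw [hD, div_mul_eq_mul_div, div_le_iff₀ (by positivity)]
  -- s^(n+1) * (n+2+s) ≤ (n+1)(n+2) * (n! * F s)
  have key : s^(n+1) * (((n:ℝ)+2)+s)
      = ((n:ℝ)+1)*(((n:ℝ)+2)) * (Nat.factorial n *
        (s^(n+1)/(Nat.factorial (n+1)) + s^(n+2)/(Nat.factorial (n+2)))) := by
    rw [hc1, hc2]
    rw [show s^(n+2) = s^(n+1) * s by ring]
    have h0 : ((n:ℝ)+1) ≠ 0 := by positivity
    have h1 : ((n:ℝ)+2) ≠ 0 := by positivity
    field_simp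
  calc s^(n+1) * (((n:ℝ)+2)+s) ≤ _ := key.le
    _ ≤ ((n:ℝ)+1)*(((n:ℝ)+2)) * (Nat.factorial n * Ffun n s) := by
        apply mul_le_mul_of_nonneg_left
        · exact mul_le_mul_of_nonneg_left hFlb hc.le
        · positivity

lemma DltN (n : ℕ) {s : ℝ} (hs : 0 < s) : Dfun n s < (n:ℝ)+1 := by
  have h := Dub n hs
  have hD := Dpos n hs
  nlinarith


lemma F_hasDerivAt (n : ℕ) (s : ℝ) :
    HasDerivAt (Ffun n) (Ffun n s + s ^ n / (Nat.factorial n)) s := by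
  have h := (Real.hasDerivAt_exp s).sub (T_hasDerivAt n s)
  refine h.congr_deriv ?_
  simp [Ffun]; ring

lemma D_hasDerivAt (n : ℕ) {s : ℝ} (hs : 0 < s) :
    HasDerivAt (Dfun n) (Dfun n s * (((n:ℝ)+1) - Dfun n s) / s - Dfun n s) s := by
  have hF := Fpos n hs
  have hc := fact_pos' n
  have hden : (Nat.factorial n : ℝ) * Ffun n s ≠ 0 := by positivity
  have h1 : HasDerivAt (fun x : ℝ => (Nat.factorial n : ℝ) * Ffun n x)
      ((Nat.factorial n : ℝ) * (Ffun n s + s ^ n / (Nat.factorial n))) s :=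
    (F_hasDerivAt n s).const_mul _
  have h2 := (hasDerivAt_pow (n+1) s).div h1 hden
  refine h2.congr_deriv ?_
  have hD : Dfun n s = s^(n+1) / (Nat.factorial n * Ffun n s) := rfl
  rw [hD]
  push_cast
  field_simp
  ring

lemma K_hasDerivAt (n : ℕ) (A B : ℝ) {s : ℝ} (hs : 0 < s) :
    HasDerivAt (Kfun n A B)
      (((A + B * Dfun n s) * (s - (((n:ℝ)+1) - Dfun n s)) - s) / s) s := by
  have hD := Dpos n hs
  have hN : (0:ℝ) < (n:ℝ)+1 := by positivity
  have hlog : HasDerivAt (fun x : ℝ => Real.log (Dfun n x))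
      ((Dfun n s * (((n:ℝ)+1) - Dfun n s) / s - Dfun n s) / Dfun n s) s :=
    (D_hasDerivAt n hs).log (ne_of_gt hD)
  -- log ((n+1)/D x) = log (n+1) - log (D x) near s
  have hev : (fun x : ℝ => Real.log (((n:ℝ)+1) / Dfun n x))
      =ᶠ[nhds s] (fun x : ℝ => Real.log ((n:ℝ)+1) - Real.log (Dfun n x)) := by
    filter_upwards [IsOpen.mem_nhds isOpen_Ioi hs] with x hx
    exact Real.log_div (ne_of_gt hN) (ne_of_gt (Dpos n hx))
  have h1 : HasDerivAt (fun x : ℝ => Real.log (((n:ℝ)+1) / Dfun n x))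
      (0 - (Dfun n s * (((n:ℝ)+1) - Dfun n s) / s - Dfun n s) / Dfun n s) s := by
    exact HasDerivAt.congr_of_eventuallyEq ((hasDerivAt_const s _).sub hlog) hev
  have h2 : HasDerivAt (fun x : ℝ => ((n:ℝ)+1) - Dfun n x)
      (0 - (Dfun n s * (((n:ℝ)+1) - Dfun n s) / s - Dfun n s)) s :=
    (hasDerivAt_const s _).sub (D_hasDerivAt n hs)
  have h3 := ((h1.const_mul A).add (h2.const_mul B)).sub (hasDerivAt_id s)
  refine h3.congr_deriv ?_
  field_simp
  ring


lemma K_pos_small (n : ℕ) (A B : ℝ) (hA : 1 < A) (hB : B = A / (A-1)) {s : ℝ}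
    (hs : 0 < s) (hsε : s < A + B*((n:ℝ)+1) - ((n:ℝ)+2)) : 0 < Kfun n A B s := by
  set N : ℝ := (n:ℝ)+1 with hN
  set d : ℝ := Dfun n s with hd
  have hN0 : (0:ℝ) < N := by positivity
  have hd0 : 0 < d := Dpos n hs
  have hdN : d < N := DltN n hs
  have h1 : d * ((N+1)+s) ≤ N*(N+1) := by
    have h := Dub n hs
    have e1 : (N+1) = ((n:ℝ)+2) := by rw [hN]; ring
    rw [e1, hN]
    exact h
  set t : ℝ := Real.log (N / d) with ht
  have h2 : N - d ≤ N * t := by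
    have hl : Real.log (d/N) ≤ d/N - 1 := Real.log_le_sub_one_of_pos (by positivity)
    have : t = - Real.log (d/N) := by
      rw [ht, ← Real.log_inv]; congr 1; field_simp
    rw [this]
    have h3 := mul_le_mul_of_nonneg_left hl hN0.le
    have e : N*(d/N - 1) = d - N := by field_simp
    rw [e] at h3
    nlinarith [h3]
  have hA0 : (0:ℝ) < A := by linarith
  have hB1 : 1 < B := by rw [hB]; rw [lt_div_iff₀ (by linarith)]; linarith
  have hKs : Kfun n A B s = A * t + B * (N - d) - s := rfl
  rw [hKs]
  set u : ℝ := N - d with hu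
  have hu0 : 0 < u := by simp [hu]; linarith
  have p2 : N * s ≤ u * ((N+1)+s) := by
    have : u * ((N+1)+s) = N*((N+1)+s) - d*((N+1)+s) := by ring
    rw [this]; nlinarith [h1]
  have q1 : 0 ≤ A * ((N*t - u) * ((N+1)+s)) :=
    mul_nonneg hA0.le (mul_nonneg (by linarith) (by positivity))
  have q2 : 0 ≤ A * (u*((N+1)+s) - N*s) := mul_nonneg hA0.le (by linarith)
  have q3 : 0 ≤ (B*N) * (u*((N+1)+s) - N*s) :=
    mul_nonneg (by positivity) (by linarith)
  have q4 : 0 < (N*s) * ((A + B*N) - ((N+1)+s)) :=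
    mul_pos (by positivity) (by linarith)
  nlinarith [q1, q2, q3, q4, mul_pos hN0 (show (0:ℝ) < (N+1)+s by linarith)]

lemma Kcont (n : ℕ) (A B : ℝ) : ContinuousOn (Kfun n A B) (Set.Ioi (0:ℝ)) := by
  have hFc : Continuous (Ffun n) := by
    unfold Ffun T
    exact Real.continuous_exp.sub (continuous_finset_sum _ (fun k _ =>
      (continuous_pow k).div_const _))
  have hden : ∀ s ∈ Set.Ioi (0:ℝ), (Nat.factorial n : ℝ) * Ffun n s ≠ 0 := by
    intro s hs
    have := Fpos n hs
    have := fact_pos' n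
    positivity
  have hDc : ContinuousOn (Dfun n) (Set.Ioi (0:ℝ)) := by
    exact ((continuous_pow (n+1)).continuousOn).div
      ((continuous_const.mul hFc).continuousOn) hden
  have hlogc : ContinuousOn (fun s => Real.log ((((n:ℝ)+1)) / Dfun n s)) (Set.Ioi (0:ℝ)) := by
    apply ContinuousOn.log
    · exact continuousOn_const.div hDc (fun s hs => ne_of_gt (Dpos n hs))
    · intro s hs
      have h1 : (0:ℝ) < (n:ℝ)+1 := by positivity
      have := Dpos n hs
      positivity
  exact (((hlogc.const_smul A).add ((continuousOn_const.sub hDc).const_smul B)).sub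
    continuousOn_id : ContinuousOn _ _)


theorem stmt10 (n : ℕ) (A B : ℝ) (hA : 1 < A) (hB : B = A / (A - 1))
    (δ : ℝ) (hδ : δ ∈ Set.Ioo 0 ((n : ℝ) + 1))
    (s₀ : ℝ) (hs₀ : 0 < s₀)
    (heq : Real.exp s₀ = T n s₀ + s₀ ^ (n + 1) / (δ * Nat.factorial n)) :
    s₀ < A * Real.log (((n : ℝ) + 1) / δ) + B * ((n : ℝ) + 1 - δ) := by
  obtain ⟨hδ0, hδN⟩ := hδ
  have hc := fact_pos' n
  have hA0 : (0:ℝ) < A := by linarith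
  have hA1 : (0:ℝ) < A - 1 := by linarith
  have hB1 : 1 < B := by rw [hB, lt_div_iff₀ hA1]; linarith
  have hB0 : (0:ℝ) < B := by linarith
  have hAB : A * B = A + B := by rw [hB]; field_simp; ring
  have hFs₀ : Ffun n s₀ = s₀^(n+1) / (δ * Nat.factorial n) := by
    simp only [Ffun]; linarith [heq]
  have hDs₀ : Dfun n s₀ = δ := by
    rw [Dfun, hFs₀]
    have hp : (0:ℝ) < s₀ ^ (n+1) := pow_pos hs₀ _
    field_simp
  by_contra hcon
  push_neg at hcon
  have hK0 : Kfun n A B s₀ ≤ 0 := by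
    simp only [Kfun, hDs₀]; linarith
  have hεpos : 0 < A + B*((n:ℝ)+1) - ((n:ℝ)+2) := by
    nlinarith [mul_pos (show (0:ℝ) < (n:ℝ)+1 by positivity) (show (0:ℝ) < B - 1 by linarith)]
  set M := {x : ℝ | x ∈ Set.Ioc 0 s₀ ∧ Kfun n A B x ≤ 0} with hM
  have hs₀M : s₀ ∈ M := ⟨⟨hs₀, le_refl _⟩, hK0⟩
  have hMne : M.Nonempty := ⟨s₀, hs₀M⟩
  have hMsub : M ⊆ Set.Icc (A + B*((n:ℝ)+1) - ((n:ℝ)+2)) s₀ := by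
    rintro x ⟨⟨hx0, hxs⟩, hKx⟩
    refine ⟨?_, hxs⟩
    by_contra h
    push_neg at h
    exact absurd hKx (not_le.mpr (K_pos_small n A B hA hB hx0 h))
  have hbdd : BddBelow M := ⟨_, fun x hx => (hMsub hx).1⟩
  have hmem : sInf M ∈ Set.Icc (A + B*((n:ℝ)+1) - ((n:ℝ)+2)) s₀ ∩
      (Kfun n A B) ⁻¹' (Set.Iic 0) := by
    have hclosed : IsClosed (Set.Icc (A + B*((n:ℝ)+1) - ((n:ℝ)+2)) s₀ ∩
        (Kfun n A B) ⁻¹' (Set.Iic 0)) := by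
      refine ContinuousOn.preimage_isClosed_of_isClosed
        ((Kcont n A B).mono ?_) isClosed_Icc isClosed_Iic
      intro x hx
      exact lt_of_lt_of_le hεpos hx.1
    have hsub2 : M ⊆ _ := fun x hx => Set.mem_inter (hMsub hx) hx.2
    exact hclosed.closure_subset ((closure_mono hsub2) (csInf_mem_closure hMne hbdd))
  obtain ⟨⟨hεm, hms₀⟩, hKm'⟩ := hmem
  set m := sInf M with hm
  have hKm : Kfun n A B m ≤ 0 := hKm'
  have hm0 : 0 < m := lt_of_lt_of_le hεpos hεm
  have hd0 := Dpos n hm0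
  have hdN := DltN n hm0
  set d := Dfun n m with hd
  have ht0 : 0 < Real.log (((n:ℝ)+1) / d) :=
    Real.log_pos (by rw [lt_div_iff₀ hd0]; linarith)
  have hmR : A * Real.log (((n:ℝ)+1)/d) + B * (((n:ℝ)+1) - d) ≤ m := by
    have : Kfun n A B m = A * Real.log (((n:ℝ)+1)/d) + B * (((n:ℝ)+1) - d) - m := rfl
    linarith [this ▸ hKm]
  have hBu : B * (((n:ℝ)+1) - d) < m := by
    nlinarith [mul_pos hA0 ht0]
  have hu0 : (0:ℝ) < ((n:ℝ)+1) - d := by linarith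
  have key : 0 < (A + B*d)*(m - (((n:ℝ)+1) - d)) - m := by
    have p1 : 0 < (A + B*d) * (m - B*(((n:ℝ)+1) - d)) :=
      mul_pos (by positivity) (by linarith)
    have p2 : 0 < m * (B*d*(B-1)) :=
      mul_pos hm0 (mul_pos (mul_pos hB0 hd0) (by linarith))
    nlinarith [p1, p2, hAB, hB0, hu0, hm0]
  have hκ : 0 < ((A + B * d) * (m - (((n:ℝ)+1) - d)) - m) / m := div_pos key hm0
  have hKd := K_hasDerivAt n A B hm0
  have hslope := hasDerivAt_iff_tendsto_slope.mp hKd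
  have hev : ∀ᶠ x in nhdsWithin m {m}ᶜ, 0 < slope (Kfun n A B) m x :=
    hslope.eventually (eventually_gt_nhds hκ)
  have hev2 : ∀ᶠ x in nhdsWithin m (Set.Iio m), 0 < slope (Kfun n A B) m x :=
    hev.filter_mono (nhdsWithin_mono m (fun x hx => ne_of_lt hx))
  have hev3 : ∀ᶠ x in nhdsWithin m (Set.Iio m), x ∈ Set.Ioo 0 m :=
    Filter.eventually_of_mem (Ioo_mem_nhdsLT_of_mem ⟨hm0, le_refl m⟩) (fun x hx => hx)
  obtain ⟨x, hsl, hx0m⟩ := (hev2.and hev3).exists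
  obtain ⟨hx0, hxm⟩ := hx0m
  have hKx : Kfun n A B x < 0 := by
    rw [slope_def_field] at hsl
    have hxm' : x - m < 0 := by linarith
    have := (div_pos_iff.mp hsl)
    rcases this with ⟨h1, h2⟩ | ⟨h1, h2⟩
    · linarith
    · linarith
  have hxM : x ∈ M := ⟨⟨hx0, (hxm.trans_le hms₀).le⟩, hKx.le⟩
  exact absurd (csInf_le hbdd hxM) (not_le.mpr hxm)
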